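/- arXiv:2412.05349 — 2 statements merged into one kernel-verified Lean document; each statement's English description precedes it below -/
import Mathlib

section
/- Let α ∈ (0,1), ρ > 0, T > 0, A an n × n real matrix, and B an n × m real matrix. Define the controllability Gramian W_c[0,T] = ∫_0^T e^{-2ρ(T-τ)} (T-τ)^{2α-2} E_{α,α}((T-τ)^α A) B Bᵀ E_{α,α}((T-τ)^α A)ᵀ dτ. If W_c[0,T] is invertible, then for every initial state y₀ ∈ ℝⁿ the control u(τ) = -(T-τ)^{α-1} e^{-ρ(T-τ)} Bᵀ E_{α,α}(Aᵀ (T-τ)^α) W_c[0,T]^{-1} e^{-ρT} E_α(T^α A) y₀ steers the solution y(t) = e^{-ρt} E_α(A t^α) y₀ + ∫_0^t e^{-ρ(t-τ)} (t-τ)^{α-1} E_{α,α}(A(t-τ)^α) B u(τ) dτ to y(T) = 0. -/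
/-!
Write `k(s) = e^{-ρs} s^{α-1}`, `E(τ) = E_{α,α}((T-τ)^α A)` and `z = e^{-ρT} E_α(T^α A) y₀`
for the free response at time `T`. The control is `u(τ) = -k(T-τ) Bᵀ E(τ)ᵀ W_c⁻¹ z`, so the
forced integrand `k(T-τ) E(τ) B u(τ)` equals `-k(T-τ)² E B Bᵀ Eᵀ W_c⁻¹ z`, the Gramian integrand
applied to `-W_c⁻¹ z`. Integrating yields `-W_c W_c⁻¹ z = -z`, which cancels the free response.
-/

open Matrix MeasureTheory

attribute [local instance] Matrix.linftyOpNormedRing Matrix.linftyOpNormedAlgebra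

/-- One-parameter matrix Mittag-Leffler function. -/
noncomputable def mlOne {n : ℕ} (α : ℝ) (M : Matrix (Fin n) (Fin n) ℝ) :
    Matrix (Fin n) (Fin n) ℝ :=
  ∑' l : ℕ, (Real.Gamma (α * l + 1))⁻¹ • M ^ l

/-- Two-parameter matrix Mittag-Leffler function with both parameters `α`. -/
noncomputable def mlTwo {n : ℕ} (α α' : ℝ) (M : Matrix (Fin n) (Fin n) ℝ) :
    Matrix (Fin n) (Fin n) ℝ :=
  ∑' l : ℕ, (Real.Gamma (α * l + α'))⁻¹ • M ^ l

theorem mlTwo_transpose {n : ℕ} (α α' : ℝ) (M : Matrix (Fin n) (Fin n) ℝ) :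
    mlTwo α α' Mᵀ = (mlTwo α α' M)ᵀ := by
  simp only [mlTwo, Matrix.transpose_tsum, Matrix.transpose_smul, Matrix.transpose_pow]

theorem intervalIntegral_mulVec {ι κ : Type*} [Fintype ι] [Fintype κ] {a b : ℝ}
    {μ : Measure ℝ} {G : ℝ → Matrix ι κ ℝ}
    (hG : ∀ i j, IntervalIntegrable (fun t => G t i j) μ a b) (w : κ → ℝ) :
    ∫ t in a..b, G t *ᵥ w ∂μ = (fun i j => ∫ t in a..b, G t i j ∂μ) *ᵥ w := by
  have hrow : ∀ i, IntervalIntegrable (fun t => (G t *ᵥ w) i) μ a b := fun i => by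
    simpa only [mulVec, dotProduct, Finset.sum_fn] using
      IntervalIntegrable.sum Finset.univ fun j _ => (hG i j).mul_const (w j)
  funext i
  rw [intervalIntegral.intervalIntegral_eq_integral_uIoc, Pi.smul_apply,
    eval_integral (fun i => (hrow i).def'), ← intervalIntegral.intervalIntegral_eq_integral_uIoc]
  simp only [mulVec, dotProduct]
  rw [intervalIntegral.integral_finsetSum fun j _ => (hG i j).mul_const (w j)]
  simp only [intervalIntegral.integral_mul_const]

theorem exp_mul_rpow_sq {ρ α s : ℝ} (hs : 0 ≤ s) :
    (Real.exp (-ρ * s) * s ^ (α - 1)) ^ 2 = Real.exp (-2 * ρ * s) * s ^ (2 * α - 2) := by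
  rw [mul_pow, ← Real.exp_nat_mul, show 2 * α - 2 = (α - 1) * (2 : ℕ) by push_cast; ring,
    Real.rpow_mul_natCast hs]
  ring_nf

theorem gramian_control_steers_to_zero_general {n m : ℕ}
    (α ρ T : ℝ) (hT : 0 < T)
    (A : Matrix (Fin n) (Fin n) ℝ) (B : Matrix (Fin n) (Fin m) ℝ)
    (y₀ : Fin n → ℝ)
    (Wc : Matrix (Fin n) (Fin n) ℝ)
    (hWc : Wc = fun i j => ∫ τ in (0 : ℝ)..T,
        (Real.exp (-2 * ρ * (T - τ)) * (T - τ) ^ (2 * α - 2)) *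
          ((mlTwo α α ((T - τ) ^ α • A) * B * Bᵀ *
            (mlTwo α α ((T - τ) ^ α • A))ᵀ) i j))
    (hWcInt : ∀ i j, IntervalIntegrable (fun τ : ℝ =>
        (Real.exp (-2 * ρ * (T - τ)) * (T - τ) ^ (2 * α - 2)) *
          ((mlTwo α α ((T - τ) ^ α • A) * B * Bᵀ *
            (mlTwo α α ((T - τ) ^ α • A))ᵀ) i j)) volume 0 T)
    (hInv : IsUnit Wc)
    (u : ℝ → Fin m → ℝ)
    (hu : u = fun τ => -((T - τ) ^ (α - 1) * Real.exp (-ρ * (T - τ)) *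
        Real.exp (-ρ * T)) •
        ((Bᵀ * mlTwo α α ((T - τ) ^ α • Aᵀ) * Wc⁻¹ * mlOne α (T ^ α • A)) *ᵥ y₀))
    (y : ℝ → Fin n → ℝ)
    (hy : y = fun t => Real.exp (-ρ * t) • (mlOne α (t ^ α • A) *ᵥ y₀) +
        ∫ τ in (0 : ℝ)..t,
          (Real.exp (-ρ * (t - τ)) * (t - τ) ^ (α - 1)) •
            ((mlTwo α α ((t - τ) ^ α • A) * B) *ᵥ u τ)) :
    y T = 0 := by
  set E : ℝ → Matrix (Fin n) (Fin n) ℝ := fun τ => mlTwo α α ((T - τ) ^ α • A)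
  set G : ℝ → Matrix (Fin n) (Fin n) ℝ := fun τ =>
    (Real.exp (-2 * ρ * (T - τ)) * (T - τ) ^ (2 * α - 2)) • (E τ * B * Bᵀ * (E τ)ᵀ)
  set z := Real.exp (-ρ * T) • (mlOne α (T ^ α • A) *ᵥ y₀)
  have integrand_eq : Set.EqOn
      (fun τ => (Real.exp (-ρ * (T - τ)) * (T - τ) ^ (α - 1)) • ((E τ * B) *ᵥ u τ))
      (fun τ => -(G τ *ᵥ (Wc⁻¹ *ᵥ z))) (Set.uIcc 0 T) := by
    intro τ hτ
    have hτT : 0 ≤ T - τ := sub_nonneg.mpr (Set.uIcc_of_le hT.le ▸ hτ).2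
    simp only [G, hu, z, ← exp_mul_rpow_sq hτT, ← transpose_smul, mlTwo_transpose, E]
    simp only [mulVec_smul, smul_mulVec, mulVec_mulVec, smul_mul, smul_smul,
      Matrix.mul_assoc]
    rw [← neg_smul]
    congr 1
    ring
  have hWcz : Wc *ᵥ (Wc⁻¹ *ᵥ z) = z := by
    rw [mulVec_mulVec, mul_nonsing_inv _ ((isUnit_iff_isUnit_det Wc).mp hInv), one_mulVec]
  have control_term : ∫ τ in (0 : ℝ)..T, (Real.exp (-ρ * (T - τ)) * (T - τ) ^ (α - 1)) •
      ((E τ * B) *ᵥ u τ) = -z := by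
    have hWcG : Wc = fun i j => ∫ τ in (0 : ℝ)..T, G τ i j := hWc
    rw [intervalIntegral.integral_congr integrand_eq, intervalIntegral.integral_neg,
      intervalIntegral_mulVec (G := G) hWcInt, ← hWcG, hWcz]
  simp only [hy, E] at control_term ⊢
  rw [control_term, add_neg_cancel]

/-- If the controllability Gramian of the tempered fractional linear system is
invertible, the Gramian-based control steers any initial state `y₀` to `0` at time `T`. -/
theorem gramian_control_steers_to_zero {n m : ℕ}
    (α ρ T : ℝ) (hα : α ∈ Set.Ioo (0 : ℝ) 1) (hρ : 0 < ρ) (hT : 0 < T)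
    (A : Matrix (Fin n) (Fin n) ℝ) (B : Matrix (Fin n) (Fin m) ℝ)
    (y₀ : Fin n → ℝ)
    (Wc : Matrix (Fin n) (Fin n) ℝ)
    (hWc : Wc = fun i j => ∫ τ in (0 : ℝ)..T,
        (Real.exp (-2 * ρ * (T - τ)) * (T - τ) ^ (2 * α - 2)) *
          ((mlTwo α α ((T - τ) ^ α • A) * B * Bᵀ *
            (mlTwo α α ((T - τ) ^ α • A))ᵀ) i j))
    (hWcInt : ∀ i j, IntervalIntegrable (fun τ : ℝ =>
        (Real.exp (-2 * ρ * (T - τ)) * (T - τ) ^ (2 * α - 2)) *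
          ((mlTwo α α ((T - τ) ^ α • A) * B * Bᵀ *
            (mlTwo α α ((T - τ) ^ α • A))ᵀ) i j)) volume 0 T)
    (hInv : IsUnit Wc)
    (u : ℝ → Fin m → ℝ)
    (hu : u = fun τ => -((T - τ) ^ (α - 1) * Real.exp (-ρ * (T - τ)) *
        Real.exp (-ρ * T)) •
        ((Bᵀ * mlTwo α α ((T - τ) ^ α • Aᵀ) * Wc⁻¹ * mlOne α (T ^ α • A)) *ᵥ y₀))
    (y : ℝ → Fin n → ℝ)
    (hy : y = fun t => Real.exp (-ρ * t) • (mlOne α (t ^ α • A) *ᵥ y₀) +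
        ∫ τ in (0 : ℝ)..t,
          (Real.exp (-ρ * (t - τ)) * (t - τ) ^ (α - 1)) •
            ((mlTwo α α ((t - τ) ^ α • A) * B) *ᵥ u τ)) :
    y T = 0 :=
  gramian_control_steers_to_zero_general α ρ T hT A B y₀ Wc hWc hWcInt hInv u hu y hy
end

section
/- Let α ∈ (0,1), ρ > 0, A an n × n real matrix and B an n × m real matrix. For any T > 0 and any control u : [0,T] → ℝᵐ, the reachable displacement y(T) - e^{-ρT} E_α(A T^α) y₀ = ∫_0^T e^{-ρ(T-τ)} (T-τ)^{α-1} E_{α,α}(A (T-τ)^α) B u(τ) dτ lies in the column space of the Kalman matrix K = [B, AB, A²B, …, A^{n-1}B]. Consequently, if the tempered fractional system is controllable (every state reachable), then rank(K) = n. -/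
/-!
By Cayley–Hamilton every power of `A` is a linear combination of `I, A, …, A^{n-1}`; since that
span is a closed subspace, it also contains every Mittag-Leffler series in `A`. Hence the integrand
of the reachable displacement takes values in the column space of `K`, and this closed subspace
contains its integral. Controllability then forces the column space of `K` to be all of `ℝⁿ`.
-/

open Matrix MeasureTheory

attribute [local instance] Matrix.linftyOpNormedRing Matrix.linftyOpNormedAlgebra

/-- The Kalman matrix `K = [B, AB, …, A^{n-1}B]`, with block columns indexed
by `Fin n × Fin m`. -/
noncomputable def kalman {n m : ℕ} (A : Matrix (Fin n) (Fin n) ℝ)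
    (B : Matrix (Fin n) (Fin m) ℝ) : Matrix (Fin n) (Fin n × Fin m) ℝ :=
  Matrix.of fun i q => (A ^ (q.1 : ℕ) * B) i q.2

open Polynomial in
theorem pow_mem_span_pow_of_aeval_eq_zero {R A : Type*} [CommRing R] [Nontrivial R] [Ring A]
    [Algebra R A] {a : A} {p : R[X]} {N : ℕ} (hp : p.Monic) (hdeg : p.natDegree ≤ N)
    (hpa : aeval a p = 0) (k : ℕ) :
    a ^ k ∈ Submodule.span R (Set.range fun i : Fin N => a ^ (i : ℕ)) := by
  classical
  have hmod : X ^ k %ₘ p ∈ degreeLT R N := by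
    rw [mem_degreeLT]
    calc (X ^ k %ₘ p).degree < p.degree := degree_modByMonic_lt _ hp
      _ ≤ N := degree_le_of_natDegree_le hdeg
  have hmap : (degreeLT R N).map (aeval a).toLinearMap ≤
      Submodule.span R (Set.range fun i : Fin N => a ^ (i : ℕ)) := by
    rw [degreeLT_eq_span_X_pow, Submodule.map_span, Submodule.span_le]
    rintro _ ⟨_, hX, rfl⟩
    obtain ⟨i, hi, rfl⟩ := Finset.mem_image.mp hX
    exact Submodule.subset_span ⟨⟨i, Finset.mem_range.mp hi⟩, by simp⟩
  rw [← aeval_X_pow (R := R), ← aeval_modByMonic_eq_self_of_root hpa]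
  exact hmap ⟨_, hmod, rfl⟩

theorem Matrix.pow_mem_span_pow_lt {R : Type*} [CommRing R] [Nontrivial R] {n : ℕ}
    (A : Matrix (Fin n) (Fin n) R) (k : ℕ) :
    A ^ k ∈ Submodule.span R (Set.range fun i : Fin n => A ^ (i : ℕ)) :=
  pow_mem_span_pow_of_aeval_eq_zero A.charpoly_monic (by simp [A.charpoly_natDegree_eq_dim])
    A.aeval_self_charpoly k

theorem intervalIntegral_mem_of_forall_mem {E : Type*} [NormedAddCommGroup E]
    [NormedSpace ℝ E] [CompleteSpace E] {S : Submodule ℝ E} [IsClosed (S : Set E)]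
    {f : ℝ → E} {a b : ℝ} {μ : Measure ℝ} (hf : IntervalIntegrable f μ a b)
    (hfS : ∀ x, f x ∈ S) : ∫ x in a..b, f x ∂μ ∈ S := by
  rw [← S.ker_mkQ, LinearMap.mem_ker, ← S.toLinearMap_mkQL, ContinuousLinearMap.coe_coe,
    ← S.mkQL.intervalIntegral_comp_comm hf]
  simp [(Submodule.Quotient.mk_eq_zero S).mpr (hfS _)]

section

variable {n m : ℕ}

theorem mlTwo_smul_mem_span_pow (α α' s : ℝ) (A : Matrix (Fin n) (Fin n) ℝ) :
    mlTwo α α' (s • A) ∈ Submodule.span ℝ (Set.range fun i : Fin n => A ^ (i : ℕ)) :=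
  tsum_mem (Submodule.closed_of_finiteDimensional _) fun l => by
    rw [smul_pow, smul_smul]
    exact Submodule.smul_mem _ _ (A.pow_mem_span_pow_lt l)

theorem pow_mul_mulVec_mem_range_kalman (A : Matrix (Fin n) (Fin n) ℝ)
    (B : Matrix (Fin n) (Fin m) ℝ) (i : Fin n) (x : Fin m → ℝ) :
    (A ^ (i : ℕ) * B) *ᵥ x ∈ LinearMap.range (kalman A B).mulVecLin := by
  refine ⟨fun q => if q.1 = i then x q.2 else 0, ?_⟩
  ext r
  simp [kalman, Matrix.mulVec, dotProduct, Fintype.sum_prod_type, mul_ite]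

theorem mul_mulVec_mem_range_kalman (A : Matrix (Fin n) (Fin n) ℝ)
    (B : Matrix (Fin n) (Fin m) ℝ) {M : Matrix (Fin n) (Fin n) ℝ}
    (hM : M ∈ Submodule.span ℝ (Set.range fun i : Fin n => A ^ (i : ℕ))) (x : Fin m → ℝ) :
    (M * B) *ᵥ x ∈ LinearMap.range (kalman A B).mulVecLin := by
  induction hM using Submodule.span_induction with
  | mem M hM =>
    obtain ⟨i, rfl⟩ := hM
    exact pow_mul_mulVec_mem_range_kalman A B i x
  | zero => simp
  | add M M' _ _ hM hM' => rw [Matrix.add_mul, add_mulVec]; exact add_mem hM hM'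
  | smul c M _ hM => rw [Matrix.smul_mul, smul_mulVec]; exact Submodule.smul_mem _ c hM

theorem intervalIntegral_mlTwo_mulVec_mem_range_kalman (α α' : ℝ)
    (A : Matrix (Fin n) (Fin n) ℝ) (B : Matrix (Fin n) (Fin m) ℝ) {c s : ℝ → ℝ}
    {u : ℝ → Fin m → ℝ} {a b : ℝ}
    (hf : IntervalIntegrable (fun τ => c τ • ((mlTwo α α' (s τ • A) * B) *ᵥ u τ)) volume a b) :
    (∫ τ in a..b, c τ • ((mlTwo α α' (s τ • A) * B) *ᵥ u τ)) ∈
      LinearMap.range (kalman A B).mulVecLin :=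
  have : IsClosed (LinearMap.range (kalman A B).mulVecLin : Set (Fin n → ℝ)) :=
    Submodule.closed_of_finiteDimensional _
  intervalIntegral_mem_of_forall_mem hf fun τ => Submodule.smul_mem _ _ <|
    mul_mulVec_mem_range_kalman A B (mlTwo_smul_mem_span_pow α α' _ A) (u τ)

end

theorem reachable_in_kalman_range_general {n m : ℕ}
    (α ρ : ℝ)
    (A : Matrix (Fin n) (Fin n) ℝ) (B : Matrix (Fin n) (Fin m) ℝ) :
    (∀ (T : ℝ), 0 < T → ∀ u : ℝ → Fin m → ℝ,
      (IntervalIntegrable (fun τ : ℝ =>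
          (Real.exp (-ρ * (T - τ)) * (T - τ) ^ (α - 1)) •
            ((mlTwo α α ((T - τ) ^ α • A) * B) *ᵥ u τ)) volume 0 T) →
      ∃ w : Fin n × Fin m → ℝ,
        kalman A B *ᵥ w = ∫ τ in (0 : ℝ)..T,
          (Real.exp (-ρ * (T - τ)) * (T - τ) ^ (α - 1)) •
            ((mlTwo α α ((T - τ) ^ α • A) * B) *ᵥ u τ)) ∧
    ((∀ z : Fin n → ℝ, ∃ (T : ℝ) (_ : 0 < T) (u : ℝ → Fin m → ℝ),
        IntervalIntegrable (fun τ : ℝ =>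
          (Real.exp (-ρ * (T - τ)) * (T - τ) ^ (α - 1)) •
            ((mlTwo α α ((T - τ) ^ α • A) * B) *ᵥ u τ)) volume 0 T ∧
        (∫ τ in (0 : ℝ)..T,
          (Real.exp (-ρ * (T - τ)) * (T - τ) ^ (α - 1)) •
            ((mlTwo α α ((T - τ) ^ α • A) * B) *ᵥ u τ)) = z) →
      (kalman A B).rank = n) := by
  refine ⟨fun T _ u hu => intervalIntegral_mlTwo_mulVec_mem_range_kalman α α A B hu,
    fun hctrl => ?_⟩
  have htop : LinearMap.range (kalman A B).mulVecLin = ⊤ := by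
    refine eq_top_iff.mpr fun z _ => ?_
    obtain ⟨T, -, u, hu, rfl⟩ := hctrl z
    exact intervalIntegral_mlTwo_mulVec_mem_range_kalman α α A B hu
  rw [Matrix.rank, htop, finrank_top, Module.finrank_fin_fun]

/-- Every reachable displacement of the tempered fractional system lies in the
column space of the Kalman matrix; consequently, controllability forces
`rank K = n`. -/
theorem reachable_in_kalman_range {n m : ℕ}
    (α ρ : ℝ) (hα : α ∈ Set.Ioo (0 : ℝ) 1) (hρ : 0 < ρ)
    (A : Matrix (Fin n) (Fin n) ℝ) (B : Matrix (Fin n) (Fin m) ℝ) :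
    (∀ (T : ℝ), 0 < T → ∀ u : ℝ → Fin m → ℝ,
      (IntervalIntegrable (fun τ : ℝ =>
          (Real.exp (-ρ * (T - τ)) * (T - τ) ^ (α - 1)) •
            ((mlTwo α α ((T - τ) ^ α • A) * B) *ᵥ u τ)) volume 0 T) →
      ∃ w : Fin n × Fin m → ℝ,
        kalman A B *ᵥ w = ∫ τ in (0 : ℝ)..T,
          (Real.exp (-ρ * (T - τ)) * (T - τ) ^ (α - 1)) •
            ((mlTwo α α ((T - τ) ^ α • A) * B) *ᵥ u τ)) ∧
    ((∀ z : Fin n → ℝ, ∃ (T : ℝ) (_ : 0 < T) (u : ℝ → Fin m → ℝ),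
        IntervalIntegrable (fun τ : ℝ =>
          (Real.exp (-ρ * (T - τ)) * (T - τ) ^ (α - 1)) •
            ((mlTwo α α ((T - τ) ^ α • A) * B) *ᵥ u τ)) volume 0 T ∧
        (∫ τ in (0 : ℝ)..T,
          (Real.exp (-ρ * (T - τ)) * (T - τ) ^ (α - 1)) •
            ((mlTwo α α ((T - τ) ^ α • A) * B) *ᵥ u τ)) = z) →
      (kalman A B).rank = n) :=
  reachable_in_kalman_range_general α ρ A B
end
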